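/- Let R be a commutative ring and A a Hopf algebra over R with antipode S. Then the coshear map of A, the R-linear endomorphism of A ⊗[R] A determined by a ⊗ b ↦ Σ a₍₁₎·b ⊗ a₍₂₎, is bijective if and only if S : A → A is bijective. -/

import Mathlib

/-!
For `f : A →ₗ A` let `T f (a ⊗ b) = Σ a₍₁₎ ⊗ f(a₍₂₎) b` and `U f (a ⊗ b) = Σ a f(b₍₁₎) ⊗ b₍₂₎`.
Coassociativity gives `T f ∘ T g = T (f ⋆ g)` and `U f ∘ U g = U (g ⋆ f)` for the convolution
product `⋆`, and `T 1 = U 1 = id` for its unit `η ∘ ε`; as `id` is convolution-invertible with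
inverse `S`, the fusion operator `T id` and the Galois map `U id` are bijective. The coshear map
factors as `T id ∘ (id ⊗ S) ∘ U id`, and `id ⊗ S` is bijective iff `S` is, since `S` is a
retract of `id ⊗ S` through `b ↦ 1 ⊗ b` and `a ⊗ b ↦ ε(a) b`.
-/

open TensorProduct

variable (R A : Type*) [CommRing R] [Ring A] [HopfAlgebra R A]

/-- The coshear map of a bialgebra `A` over `R`: the `R`-linear endomorphism of `A ⊗[R] A`
determined by `a ⊗ b ↦ Σ a₍₁₎·b ⊗ a₍₂₎`. -/
noncomputable def coshearMap : A ⊗[R] A →ₗ[R] A ⊗[R] A :=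
  (LinearMap.mul' R A).rTensor A ∘ₗ (TensorProduct.assoc R A A A).symm.toLinearMap ∘ₗ
    ((TensorProduct.comm R A A).toLinearMap.lTensor A) ∘ₗ
    (TensorProduct.assoc R A A A).toLinearMap ∘ₗ
    (Coalgebra.comul (R := R) (A := A)).rTensor A

open Coalgebra LinearMap WithConv

namespace LinearMap

variable {R M N P : Type*} [CommSemiring R] [AddCommMonoid M] [AddCommMonoid N] [AddCommMonoid P]
  [Module R M] [Module R N] [Module R P]

theorem bijective_lTensor_iff_of_apply_eq_one (φ : M →ₗ[R] R) {m : M} (hm : φ m = 1)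
    (g : N →ₗ[R] P) : Function.Bijective (g.lTensor M) ↔ Function.Bijective g := by
  refine ⟨fun h ↦ ?_, fun h ↦ (LinearEquiv.ofBijective g h).lTensor M |>.bijective⟩
  -- `x ⊗ n ↦ φ x • n` is a retraction of `n ↦ m ⊗ n`, and both are natural in `N`
  have retractN : Function.LeftInverse (TensorProduct.lid R N ∘ₗ φ.rTensor N)
      (TensorProduct.mk R M N m) := fun _ ↦ by simp [hm]
  have retractP : Function.LeftInverse (TensorProduct.lid R P ∘ₗ φ.rTensor P)
      (TensorProduct.mk R M P m) := fun _ ↦ by simp [hm]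
  have comm : (TensorProduct.lid R P ∘ₗ φ.rTensor P) ∘ₗ g.lTensor M =
      g ∘ₗ TensorProduct.lid R N ∘ₗ φ.rTensor N := by
    ext; simp
  have inj : Function.Injective (TensorProduct.mk R M P m ∘ g) := h.1.comp retractN.injective
  have surj : Function.Surjective (g ∘ (TensorProduct.lid R N ∘ₗ φ.rTensor N)) := by
    rw [← coe_comp, ← comm, coe_comp]
    exact retractP.surjective.comp h.2
  exact ⟨inj.of_comp, surj.of_comp⟩

theorem lTensor_tmul_one_mul {A : Type*} [Semiring A] [Algebra R A] (f : A →ₗ[R] A) (c : A)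
    (z : A ⊗[R] A) : f.lTensor A ((c ⊗ₜ 1) * z) = (c ⊗ₜ 1) * f.lTensor A z := by
  induction z using TensorProduct.induction_on with
  | zero => simp
  | tmul x y => simp [Algebra.TensorProduct.tmul_mul_tmul]
  | add u v hu hv => simp [mul_add, hu, hv]

end LinearMap

namespace Bialgebra

variable {R A : Type*} [CommSemiring R] [Semiring A] [Bialgebra R A]

/-- For `f = id` this is the fusion operator `a ⊗ b ↦ Σ a₍₁₎ ⊗ a₍₂₎ b`. -/
noncomputable def fusionMap (f : A →ₗ[R] A) : Module.End R (A ⊗[R] A) :=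
  mul' R (A ⊗[R] A) ∘ₗ map (f.lTensor A ∘ₗ comul) (TensorProduct.mk R A A 1)

@[simp] lemma fusionMap_tmul (f : A →ₗ[R] A) (a b : A) :
    fusionMap f (a ⊗ₜ b) = f.lTensor A (comul a) * (1 ⊗ₜ b) := by
  simp [fusionMap]

lemma fusionMap_mul_one_tmul (f : A →ₗ[R] A) (z : A ⊗[R] A) (c : A) :
    fusionMap f (z * (1 ⊗ₜ c)) = fusionMap f z * (1 ⊗ₜ c) := by
  induction z using TensorProduct.induction_on with
  | zero => simp
  | tmul x y => simp [Algebra.TensorProduct.tmul_mul_tmul, mul_assoc]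
  | add u v hu hv => simp [add_mul, hu, hv]

lemma fusionMap_id_tmul_one_mul (z : A ⊗[R] A) (c : A) :
    fusionMap .id ((c ⊗ₜ 1) * z) = comul c * fusionMap .id z := by
  induction z using TensorProduct.induction_on with
  | zero => simp
  | tmul x y => simp [Algebra.TensorProduct.tmul_mul_tmul, mul_assoc]
  | add u v hu hv => simp [mul_add, hu, hv]

lemma lTensor_convOne_comul (a : A) :
    (1 : WithConv (A →ₗ[R] A)).ofConv.lTensor A (comul a) = a ⊗ₜ 1 := by
  rw [LinearMap.convOne_def, ofConv_toConv, lTensor_comp_apply, lTensor_counit_comul]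
  simp

lemma fusionMap_comp_lTensor_comp_comul (f g : A →ₗ[R] A) :
    fusionMap f ∘ₗ g.lTensor A ∘ₗ comul = (toConv f * toConv g).ofConv.lTensor A ∘ₗ comul := by
  have h : fusionMap f ∘ₗ g.lTensor A =
      (mul' R A ∘ₗ map f g).lTensor A ∘ₗ _root_.TensorProduct.assoc R A A A ∘ₗ comul.rTensor A := by
    refine TensorProduct.ext' fun x y ↦ ?_
    simp only [LinearMap.comp_apply, lTensor_tmul, fusionMap_tmul, rTensor_tmul,
      LinearEquiv.coe_coe]
    induction comul (R := R) x using TensorProduct.induction_on with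
    | zero => simp
    | tmul p q => simp [Algebra.TensorProduct.tmul_mul_tmul]
    | add u v hu hv => simp [add_mul, hu, hv, add_tmul]
  rw [← comp_assoc, h, comp_assoc, comp_assoc, coassoc, ← comp_assoc, ← lTensor_comp,
    LinearMap.convMul_def]
  rfl

lemma fusionMap_comp_lTensor_comul_apply (f g : A →ₗ[R] A) (a : A) :
    fusionMap f (g.lTensor A (comul a)) = (toConv f * toConv g).ofConv.lTensor A (comul a) :=
  congr($(fusionMap_comp_lTensor_comp_comul f g) a)

noncomputable def fusionHom : WithConv (A →ₗ[R] A) →* Module.End R (A ⊗[R] A) where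
  toFun f := fusionMap f.ofConv
  map_one' := TensorProduct.ext' fun a b ↦ by
    simp [fusionMap_tmul, lTensor_convOne_comul, Algebra.TensorProduct.tmul_mul_tmul]
  map_mul' f g := TensorProduct.ext' fun a b ↦ by
    simp only [Module.End.mul_apply, fusionMap_tmul, fusionMap_mul_one_tmul,
      fusionMap_comp_lTensor_comul_apply]

/-- For `f = id` this is the Galois map `a ⊗ b ↦ Σ a b₍₁₎ ⊗ b₍₂₎`. -/
noncomputable def galoisMap (f : A →ₗ[R] A) : Module.End R (A ⊗[R] A) :=
  mul' R (A ⊗[R] A) ∘ₗ map ((TensorProduct.mk R A A).flip 1) (f.rTensor A ∘ₗ comul)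

@[simp] lemma galoisMap_tmul (f : A →ₗ[R] A) (a b : A) :
    galoisMap f (a ⊗ₜ b) = (a ⊗ₜ 1) * f.rTensor A (comul b) := by
  simp [galoisMap]

lemma galoisMap_tmul_one_mul (f : A →ₗ[R] A) (z : A ⊗[R] A) (c : A) :
    galoisMap f ((c ⊗ₜ 1) * z) = (c ⊗ₜ 1) * galoisMap f z := by
  induction z using TensorProduct.induction_on with
  | zero => simp
  | tmul x y => simp [Algebra.TensorProduct.tmul_mul_tmul, ← mul_assoc]
  | add u v hu hv => simp [mul_add, hu, hv]

lemma rTensor_convOne_comul (a : A) :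
    (1 : WithConv (A →ₗ[R] A)).ofConv.rTensor A (comul a) = 1 ⊗ₜ a := by
  rw [LinearMap.convOne_def, ofConv_toConv, rTensor_comp_apply, rTensor_counit_comul]
  simp

lemma galoisMap_comp_rTensor_comp_comul (f g : A →ₗ[R] A) :
    galoisMap f ∘ₗ g.rTensor A ∘ₗ comul = (toConv g * toConv f).ofConv.rTensor A ∘ₗ comul := by
  have h : galoisMap f ∘ₗ g.rTensor A =
      (mul' R A ∘ₗ map g f).rTensor A ∘ₗ (_root_.TensorProduct.assoc R A A A).symm ∘ₗ
        comul.lTensor A := by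
    refine TensorProduct.ext' fun x y ↦ ?_
    simp only [LinearMap.comp_apply, rTensor_tmul, galoisMap_tmul, lTensor_tmul,
      LinearEquiv.coe_coe]
    induction comul (R := R) y using TensorProduct.induction_on with
    | zero => simp
    | tmul p q => simp [Algebra.TensorProduct.tmul_mul_tmul]
    | add u v hu hv => simp [mul_add, hu, hv, tmul_add]
  rw [← comp_assoc, h, comp_assoc, comp_assoc, coassoc_symm, ← comp_assoc, ← rTensor_comp,
    LinearMap.convMul_def]
  rfl

lemma galoisMap_comp_rTensor_comul_apply (f g : A →ₗ[R] A) (a : A) :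
    galoisMap f (g.rTensor A (comul a)) = (toConv g * toConv f).ofConv.rTensor A (comul a) :=
  congr($(galoisMap_comp_rTensor_comp_comul f g) a)

noncomputable def galoisHom : (WithConv (A →ₗ[R] A))ᵐᵒᵖ →* Module.End R (A ⊗[R] A) where
  toFun f := galoisMap f.unop.ofConv
  map_one' := TensorProduct.ext' fun a b ↦ by
    simp [galoisMap_tmul, rTensor_convOne_comul, Algebra.TensorProduct.tmul_mul_tmul]
  map_mul' f g := TensorProduct.ext' fun a b ↦ by
    simp only [Module.End.mul_apply, galoisMap_tmul, galoisMap_tmul_one_mul,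
      galoisMap_comp_rTensor_comul_apply]
    rfl

end Bialgebra

namespace HopfAlgebra

variable {R A : Type*} [CommSemiring R] [Semiring A] [HopfAlgebra R A]

lemma isUnit_toConv_id : IsUnit (toConv (LinearMap.id : A →ₗ[R] A)) :=
  ⟨⟨_, toConv (antipode R), LinearMap.id_mul_antipode, LinearMap.antipode_mul_id⟩, rfl⟩

theorem bijective_fusionMap_id : Function.Bijective (Bialgebra.fusionMap (R := R) (A := A) .id) :=
  (Module.End.isUnit_iff _).1 (isUnit_toConv_id.map Bialgebra.fusionHom)

theorem bijective_galoisMap_id : Function.Bijective (Bialgebra.galoisMap (R := R) (A := A) .id) :=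
  (Module.End.isUnit_iff _).1 (isUnit_toConv_id.op.map Bialgebra.galoisHom)

lemma fusionMap_id_lTensor_antipode_comul (a : A) :
    Bialgebra.fusionMap .id ((antipode R).lTensor A (comul a)) = a ⊗ₜ[R] 1 := by
  rw [Bialgebra.fusionMap_comp_lTensor_comul_apply, LinearMap.id_mul_antipode,
    Bialgebra.lTensor_convOne_comul]

end HopfAlgebra

section

variable {R A}

lemma coshearMap_tmul (a b : A) : coshearMap R A (a ⊗ₜ b) = comul a * (b ⊗ₜ 1) := by
  simp only [coshearMap, LinearMap.coe_comp, Function.comp_apply, LinearEquiv.coe_coe,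
    LinearMap.rTensor_tmul]
  induction comul (R := R) a using TensorProduct.induction_on with
  | zero => simp
  | tmul p q => simp [Algebra.TensorProduct.tmul_mul_tmul]
  | add u v hu hv => simp [add_mul, hu, hv, add_tmul]

lemma coshearMap_eq_comp : coshearMap R A = Bialgebra.fusionMap .id ∘ₗ
    (HopfAlgebra.antipode R).lTensor A ∘ₗ Bialgebra.galoisMap .id := by
  refine TensorProduct.ext' fun a b ↦ ?_
  rw [coshearMap_tmul, LinearMap.comp_apply, LinearMap.comp_apply, Bialgebra.galoisMap_tmul,
    LinearMap.rTensor_id_apply, LinearMap.lTensor_tmul_one_mul,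
    Bialgebra.fusionMap_id_tmul_one_mul, HopfAlgebra.fusionMap_id_lTensor_antipode_comul]

end

/-- For a Hopf algebra `A` over a commutative ring `R` with antipode `S`, the coshear map
`a ⊗ b ↦ Σ a₍₁₎·b ⊗ a₍₂₎` is bijective if and only if `S : A → A` is bijective. -/
theorem bijective_coshearMap_iff_bijective_antipode :
    Function.Bijective (coshearMap R A) ↔
      Function.Bijective (HopfAlgebra.antipode (R := R) (A := A)) := by
  rw [coshearMap_eq_comp, LinearMap.coe_comp, LinearMap.coe_comp,
    Function.Bijective.of_comp_iff' HopfAlgebra.bijective_fusionMap_id,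
    Function.Bijective.of_comp_iff _ HopfAlgebra.bijective_galoisMap_id,
    LinearMap.bijective_lTensor_iff_of_apply_eq_one Coalgebra.counit Bialgebra.counit_one]
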